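/- Let Γ ≤ GL_n(ℂ) be a finitely generated group. Then Γ ∩ U, where U is the group of upper unitriangular n×n matrices, is a separable subgroup of Γ. -/

import Mathlib

open Matrix

variable {n : ℕ}

lemma diag_mul_triangular {A B : Matrix (Fin n) (Fin n) ℂ}
    (hA : A.BlockTriangular id) (hB : B.BlockTriangular id) (i : Fin n) :
    (A * B) i i = A i i * B i i := by
  rw [Matrix.mul_apply]
  refine Finset.sum_eq_single i (fun k _ hk => ?_) (by simp)
  rcases lt_or_gt_of_ne hk with h | h
  · rw [hA (show (id k : Fin n) < id i from h), zero_mul]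
  · rw [hB (show (id i : Fin n) < id k from h), mul_zero]

/-- The Borel subgroup of invertible upper triangular matrices. -/
def BorelGL (n : ℕ) : Subgroup (GL (Fin n) ℂ) where
  carrier := {g | (g : Matrix (Fin n) (Fin n) ℂ).BlockTriangular id}
  one_mem' := by simpa using Matrix.blockTriangular_one
  mul_mem' := by
    intro a b ha hb
    simpa using Matrix.BlockTriangular.mul ha hb
  inv_mem' := by
    intro a ha
    have : Invertible ((a : Matrix (Fin n) (Fin n) ℂ)) := a.invertible
    simpa [Matrix.coe_units_inv] using Matrix.blockTriangular_inv_of_blockTriangular ha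

/-- The subgroup of upper unitriangular matrices. -/
def UnitriangularGL (n : ℕ) : Subgroup (GL (Fin n) ℂ) where
  carrier := {g | (g : Matrix (Fin n) (Fin n) ℂ).BlockTriangular id ∧
      ∀ i, (g : Matrix (Fin n) (Fin n) ℂ) i i = 1}
  one_mem' := ⟨by simpa using Matrix.blockTriangular_one, by simp⟩
  mul_mem' := by
    intro a b ha hb
    refine ⟨by simpa using Matrix.BlockTriangular.mul ha.1 hb.1, fun i => ?_⟩
    show ((a : Matrix (Fin n) (Fin n) ℂ) * b) i i = 1
    rw [diag_mul_triangular ha.1 hb.1, ha.2 i, hb.2 i, one_mul]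
  inv_mem' := by
    intro a ha
    have : Invertible ((a : Matrix (Fin n) (Fin n) ℂ)) := a.invertible
    have htri : ((a : Matrix (Fin n) (Fin n) ℂ))⁻¹.BlockTriangular id :=
      Matrix.blockTriangular_inv_of_blockTriangular ha.1
    have hinv : ((a⁻¹ : GL (Fin n) ℂ) : Matrix (Fin n) (Fin n) ℂ) =
        ((a : Matrix (Fin n) (Fin n) ℂ))⁻¹ := Matrix.coe_units_inv a
    refine ⟨by rw [hinv]; exact htri, fun i => ?_⟩
    have h1 : ((a : Matrix (Fin n) (Fin n) ℂ) * ((a : Matrix (Fin n) (Fin n) ℂ))⁻¹) i i = 1 := by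
      rw [Matrix.mul_nonsing_inv _ (Matrix.isUnit_det_of_invertible _)]
      simp
    rw [hinv]
    have := diag_mul_triangular ha.1 htri i
    rw [h1, ha.2 i, one_mul] at this
    exact this.symm

lemma diag_ne_zero {g : GL (Fin n) ℂ} (hg : g ∈ BorelGL n) (i : Fin n) :
    (g : Matrix (Fin n) (Fin n) ℂ) i i ≠ 0 := by
  have hdet : (g : Matrix (Fin n) (Fin n) ℂ).det ≠ 0 := by
    have : Invertible ((g : Matrix (Fin n) (Fin n) ℂ)) := g.invertible
    exact IsUnit.ne_zero (Matrix.isUnit_det_of_invertible _)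
  rw [Matrix.det_of_upperTriangular hg] at hdet
  exact fun h => hdet (Finset.prod_eq_zero (Finset.mem_univ i) h)

/-- The diagonal-entries homomorphism on the Borel subgroup. -/
noncomputable def diagHom (n : ℕ) : ↥(BorelGL n) →* (Fin n → ℂˣ) where
  toFun g := fun i => Units.mk0 (((g : GL (Fin n) ℂ) : Matrix (Fin n) (Fin n) ℂ) i i)
      (diag_ne_zero g.2 i)
  map_one' := by
    funext i
    exact Units.ext (by simp)
  map_mul' := by
    intro a b
    funext i
    refine Units.ext ?_
    exact diag_mul_triangular a.2 b.2 i

def SeparableSubgroup {Γ : Type*} [Group Γ] (H : Subgroup Γ) : Prop :=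
  ∀ g : Γ, g ∉ H → ∃ (F : Type) (_ : Group F) (_ : Finite F) (φ : Γ →* F),
    φ g ∉ φ '' (H : Set Γ)

/-! The entries of a finite generating set of `Γ` and of their inverses generate a finitely
generated `ℤ`-subalgebra `A ⊆ ℂ` with `Γ ≤ GL_n(A)`. Such an `A` is a Jacobson ring whose residue
fields are finite, so every nonzero element of `A` survives in some finite quotient `A ⧸ m`.
If `g ∈ Γ` is not unitriangular, some entry `g i j` with `j ≤ i` differs from `δ i j`, the value
every element of `U` has there; reducing modulo an `m` not containing `g i j - δ i j` gives a
homomorphism `Γ → GL_n(A ⧸ m)` to a finite group that separates `g` from `Γ ∩ U`. -/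

instance Int.isJacobsonRing : IsJacobsonRing ℤ := by
  refine isJacobsonRing_iff_prime_eq.mpr fun P hP => ?_
  rcases eq_or_ne P ⊥ with rfl | hP₀
  · refine le_antisymm (fun x hx => ?_) Ideal.le_jacobson
    -- `x * x + 1` is a unit of `ℤ` only for `x = 0`
    rw [Ideal.mem_bot]
    rcases Int.isUnit_iff.mp (Ideal.mem_jacobson_bot.mp hx x) with h | h <;> nlinarith
  · have := hP.isMaximal hP₀
    exact Ideal.jacobson_eq_self_of_isMaximal

theorem finite_of_moduleFinite_int (K : Type*) [Field K] [Module.Finite ℤ K] : Finite K := by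
  obtain ⟨c, hc₀, hc⟩ : ∃ c : ℤ, c ≠ 0 ∧ (c : K) = 0 := by
    by_contra! h
    have hinj : Function.Injective (algebraMap ℤ K) :=
      (injective_iff_map_eq_zero _).mpr fun c hc => not_imp_comm.mp (h c) (by simpa using hc)
    exact Int.not_isField
      ((Algebra.IsIntegral.isField_iff_isField hinj).mpr (Field.toIsField K))
  exact Module.finite_of_fg_torsion K fun x =>
    ⟨⟨c, mem_nonZeroDivisors_of_ne_zero hc₀⟩, by simp [zsmul_eq_mul, hc]⟩

theorem exists_finite_quotient_mk_ne {R : Type*} [CommRing R] [IsReduced R]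
    [Algebra.FiniteType ℤ R] {x y : R} (hxy : x ≠ y) :
    ∃ m : Ideal R, Finite (R ⧸ m) ∧ Ideal.Quotient.mk m x ≠ Ideal.Quotient.mk m y := by
  have : IsJacobsonRing R := isJacobsonRing_of_finiteType (A := ℤ)
  have hjac : x - y ∉ (⊥ : Ideal R).jacobson := by
    rw [← Ideal.radical_eq_jacobson, Ideal.radical_bot_of_isReduced, Ideal.mem_bot, sub_eq_zero]
    exact hxy
  obtain ⟨m, ⟨-, hm⟩, hxym⟩ : ∃ m ∈ {J : Ideal R | ⊥ ≤ J ∧ J.IsMaximal}, x - y ∉ m := by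
    simpa [Ideal.jacobson, Submodule.mem_sInf] using hjac
  let := Ideal.Quotient.field m
  have : Algebra.FiniteType ℤ (R ⧸ m) :=
    .of_surjective (Ideal.Quotient.mkₐ ℤ m) (Ideal.Quotient.mkₐ_surjective ℤ m)
  have : Module.Finite ℤ (R ⧸ m) := finite_of_finite_type_of_isJacobsonRing ℤ _
  exact ⟨m, finite_of_moduleFinite_int _, by rwa [Ne, Ideal.Quotient.eq]⟩

theorem SeparableSubgroup.comap {G G' : Type*} [Group G] [Group G'] {H : Subgroup G}
    (hH : SeparableSubgroup H) (f : G' →* G) : SeparableSubgroup (H.comap f) := by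
  intro g hg
  obtain ⟨F, hF, hFfin, φ, hφ⟩ := hH (f g) hg
  exact ⟨F, hF, hFfin, φ.comp f, fun ⟨h, hh, hφh⟩ => hφ ⟨f h, hh, hφh⟩⟩

namespace Matrix.GeneralLinearGroup

variable {ι : Type*} [Fintype ι] [DecidableEq ι]

theorem mem_range_map_algebraMap {R K : Type*} [CommRing R] [CommRing K] [Algebra R K]
    (A : Subalgebra R K) {g : GL ι K} (hg : ∀ i j, (g : Matrix ι ι K) i j ∈ A)
    (hg' : ∀ i j, ((g⁻¹ : GL ι K) : Matrix ι ι K) i j ∈ A) :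
    g ∈ (map (algebraMap A K)).range := by
  let M : Matrix ι ι A := fun i j => ⟨_, hg i j⟩
  let M' : Matrix ι ι A := fun i j => ⟨_, hg' i j⟩
  have hinj : Function.Injective (RingHom.mapMatrix (m := ι) (algebraMap A K)) :=
    Matrix.map_injective Subtype.val_injective
  refine ⟨⟨M, M', hinj ?_, hinj ?_⟩, Units.ext rfl⟩
  · rw [map_mul, map_one]
    exact g.mul_inv
  · rw [map_mul, map_one]
    exact g.inv_mul

theorem exists_fg_subalgebra_lift {K : Type*} [CommRing K] (Γ : Subgroup (GL ι K))
    (hΓ : Γ.FG) : ∃ A : Subalgebra ℤ K, A.FG ∧ ∃ ψ : Γ →* GL ι A,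
      ∀ γ : Γ, map (algebraMap A K) (ψ γ) = γ := by
  obtain ⟨S, rfl⟩ := hΓ
  let E : Set K := ⋃ s ∈ (S : Set (GL ι K)),
    Set.range (fun p : ι × ι => (s : Matrix ι ι K) p.1 p.2) ∪
      Set.range (fun p : ι × ι => ((s⁻¹ : GL ι K) : Matrix ι ι K) p.1 p.2)
  have hE : E.Finite := S.finite_toSet.biUnion fun _ _ =>
    (Set.finite_range _).union (Set.finite_range _)
  let A := Algebra.adjoin ℤ E
  have hle : Subgroup.closure (S : Set (GL ι K)) ≤ (map (algebraMap A K)).range := by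
    refine (Subgroup.closure_le _).mpr fun s hs => mem_range_map_algebraMap A ?_ ?_
    · exact fun i j => Algebra.subset_adjoin (Set.mem_biUnion hs (Or.inl ⟨(i, j), rfl⟩))
    · exact fun i j => Algebra.subset_adjoin (Set.mem_biUnion hs (Or.inr ⟨(i, j), rfl⟩))
  have hinj : Function.Injective (map (algebraMap A K) (n := ι)) :=
    Units.map_injective (Matrix.map_injective Subtype.val_injective)
  refine ⟨A, Subalgebra.fg_def.mpr ⟨E, hE, rfl⟩,
    (MonoidHom.ofInjective hinj).symm.toMonoidHom.comp (Subgroup.inclusion hle), fun γ => ?_⟩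
  exact congrArg Subtype.val ((MonoidHom.ofInjective hinj).apply_symm_apply _)

theorem map_apply_eq_one_apply_iff {R S : Type*} [CommRing R] [CommRing S] {f : R →+* S}
    (hf : Function.Injective f) (g : GL ι R) (i j : ι) :
    (map f g : Matrix ι ι S) i j = (1 : Matrix ι ι S) i j ↔
      (g : Matrix ι ι R) i j = (1 : Matrix ι ι R) i j := by
  rw [Matrix.GeneralLinearGroup.map_apply, ← Matrix.map_one f (map_zero f) (map_one f),
    Matrix.map_apply, hf.eq_iff]

end Matrix.GeneralLinearGroup

theorem separableSubgroup_of_separated_by_entries {A ι : Type} [CommRing A] [IsReduced A]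
    [Algebra.FiniteType ℤ A] [Fintype ι] [DecidableEq ι] (H : Subgroup (GL ι A))
    (hH : ∀ g ∉ H, ∃ i j c, (g : Matrix ι ι A) i j ≠ c ∧ ∀ h ∈ H, (h : Matrix ι ι A) i j = c) :
    SeparableSubgroup H := by
  intro g hg
  obtain ⟨i, j, c, hgc, hHc⟩ := hH g hg
  obtain ⟨m, hm, hgcm⟩ := exists_finite_quotient_mk_ne hgc
  refine ⟨GL ι (A ⧸ m), inferInstance, inferInstance,
    Matrix.GeneralLinearGroup.map (Ideal.Quotient.mk m), fun ⟨h, hh, hhg⟩ => hgcm ?_⟩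
  rw [← hHc h hh, ← Matrix.GeneralLinearGroup.map_apply, ← Matrix.GeneralLinearGroup.map_apply,
    hhg]

theorem mem_unitriangularGL_iff {g : GL (Fin n) ℂ} :
    g ∈ UnitriangularGL n ↔
      ∀ i j, j ≤ i → (g : Matrix (Fin n) (Fin n) ℂ) i j = (1 : Matrix (Fin n) (Fin n) ℂ) i j := by
  constructor
  · rintro ⟨htri, hdiag⟩ i j hji
    rcases hji.lt_or_eq with h | rfl
    · rw [htri h, one_apply_ne h.ne']
    · rw [hdiag, one_apply_eq]
  · intro h
    exact ⟨fun i j hji => (h i j hji.le).trans (one_apply_ne hji.ne'),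
      fun i => (h i i le_rfl).trans (one_apply_eq i)⟩

/-- For a finitely generated Γ ≤ GL_n(ℂ), the subgroup Γ ∩ U of unitriangular
elements of Γ is separable in Γ. -/
theorem inter_unitriangular_separable (n : ℕ)
    (Γ : Subgroup (GL (Fin n) ℂ)) (hfg : Group.FG ↥Γ) :
    SeparableSubgroup ((UnitriangularGL n).subgroupOf Γ) := by
  obtain ⟨A, hA, ψ, hψ⟩ :=
    GeneralLinearGroup.exists_fg_subalgebra_lift Γ ((Group.fg_iff_subgroup_fg Γ).mp hfg)
  have : Algebra.FiniteType ℤ A := (Subalgebra.fg_iff_finiteType A).mp hA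
  have hU : (UnitriangularGL n).subgroupOf Γ =
      ((UnitriangularGL n).comap (GeneralLinearGroup.map (algebraMap A ℂ))).comap ψ := by
    ext γ
    simp [Subgroup.mem_subgroupOf, hψ]
  rw [hU]
  refine SeparableSubgroup.comap (separableSubgroup_of_separated_by_entries _ fun g hg => ?_) ψ
  obtain ⟨i, j, hji, hne⟩ := by simpa [mem_unitriangularGL_iff] using hg
  have hentry := GeneralLinearGroup.map_apply_eq_one_apply_iff (ι := Fin n)
    (f := algebraMap A ℂ) Subtype.val_injective
  exact ⟨i, j, _, fun h => hne ((hentry g i j).mpr h),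
    fun h hh => (hentry h i j).mp (mem_unitriangularGL_iff.mp hh i j hji)⟩
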